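/- arXiv:1507.02557 — 4 statements merged into one kernel-verified Lean document; each statement's English description precedes it below -/
import Mathlib

section
/- For any polynomial u of degree at most N on [-1,1], u(-1)^2 + u(1)^2 ≤ ((N+1)(N+2)/2) · ∫_{-1}^{1} u(x)^2 dx. -/
/-!
Expand `u = ∑_{k ≤ N} b_k P_k` in Legendre polynomials. As `P_k(±1) = (±1)^k` and
`∫ P_j P_k = δ_jk · 2/(2k+1)`, writing `A`, `B` for the sums of the even- and odd-indexed
coefficients gives `u(-1)² + u(1)² = 2(A² + B²)` and `∫ u² = ∑ 2 b_k²/(2k+1)`. Cauchy–Schwarz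
bounds `A²` by `(∑ (2k+1)) · ∑ b_k²/(2k+1)` over even `k ≤ N` (likewise `B²` over odd `k`), and
a sum of `2k+1` over indices `k ≤ N`, no two consecutive, is at most `(N+1)(N+2)/2`.
-/

open Polynomial Finset intervalIntegral
open scoped Nat

section IterateDerivative

variable {R : Type*} [CommRing R]

theorem monic_X_sq_sub_one : (X ^ 2 - 1 : R[X]).Monic := by
  simpa using monic_X_pow_sub_C (1 : R) two_ne_zero

theorem eval_iterate_derivative_eq_zero_of_pow_dvd {p f : R[X]} {x : R} {j k : ℕ}
    (hx : p.eval x = 0) (hf : p ^ k ∣ f) (h : j < k) : (derivative^[j] f).eval x = 0 := by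
  obtain ⟨r, hr⟩ := pow_sub_dvd_iterate_derivative_of_pow_dvd j hf
  rw [hr, eval_mul, eval_pow, hx, zero_pow (by omega), zero_mul]

theorem eval_iterate_derivative_X_sub_C_pow_mul_self (a : R) (q : R[X]) (k : ℕ) :
    (derivative^[k] ((X - C a) ^ k * q)).eval a = k ! * q.eval a := by
  have hq : (X - C a) ^ k * q
      = C (q.eval a) * (X - C a) ^ k + (X - C a) ^ (k + 1) * (q /ₘ (X - C a)) := by
    conv_lhs => rw [← modByMonic_add_div q (X - C a), modByMonic_X_sub_C_eq_C_eval]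
    ring
  have hrest : (derivative^[k] ((X - C a) ^ (k + 1) * (q /ₘ (X - C a)))).eval a = 0 :=
    eval_iterate_derivative_eq_zero_of_pow_dvd (by simp) (dvd_mul_right _ _) k.lt_succ_self
  rw [hq, iterate_map_add, iterate_derivative_C_mul, iterate_derivative_X_sub_pow_self,
    eval_add, hrest]
  simp [mul_comm]

theorem X_sq_sub_one_pow_eq (k : ℕ) :
    (X ^ 2 - 1 : R[X]) ^ k = (X - C 1) ^ k * (X - C (-1)) ^ k := by
  rw [← mul_pow]; simp only [map_one, map_neg, sub_neg_eq_add]; ring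

theorem eval_iterate_derivative_X_sq_sub_one_pow_of_lt {x : R} (hx : x ^ 2 = 1) {j k : ℕ}
    (h : j < k) : (derivative^[j] ((X ^ 2 - 1 : R[X]) ^ k)).eval x = 0 :=
  eval_iterate_derivative_eq_zero_of_pow_dvd (by simp [hx]) dvd_rfl h

theorem eval_one_iterate_derivative_X_sq_sub_one_pow (k : ℕ) :
    (derivative^[k] ((X ^ 2 - 1 : R[X]) ^ k)).eval 1 = k ! * 2 ^ k := by
  rw [X_sq_sub_one_pow_eq, eval_iterate_derivative_X_sub_C_pow_mul_self]
  norm_num [one_add_one_eq_two]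

theorem eval_neg_one_iterate_derivative_X_sq_sub_one_pow (k : ℕ) :
    (derivative^[k] ((X ^ 2 - 1 : R[X]) ^ k)).eval (-1) = k ! * (-2) ^ k := by
  rw [X_sq_sub_one_pow_eq, mul_comm, eval_iterate_derivative_X_sub_C_pow_mul_self]
  norm_num

theorem natDegree_X_sq_sub_one_pow [Nontrivial R] (k : ℕ) :
    ((X ^ 2 - 1 : R[X]) ^ k).natDegree = 2 * k := by
  rw [monic_X_sq_sub_one.natDegree_pow, ← C_1, natDegree_X_pow_sub_C, mul_comm]

theorem coeff_X_sq_sub_one_pow_two_mul [Nontrivial R] (k : ℕ) :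
    ((X ^ 2 - 1 : R[X]) ^ k).coeff (2 * k) = 1 := by
  rw [← natDegree_X_sq_sub_one_pow (R := R) k, coeff_natDegree,
    (monic_X_sq_sub_one.pow k).leadingCoeff]

end IterateDerivative

theorem iterate_derivative_eq_C_of_natDegree_le {R : Type*} [CommSemiring R] {p : R[X]} {n : ℕ}
    (hp : p.natDegree ≤ n) : derivative^[n] p = C (n ! * p.coeff n) := by
  have hdeg : (derivative^[n] p).natDegree ≤ 0 :=
    (natDegree_iterate_derivative p n).trans (by omega)
  rw [eq_C_of_natDegree_le_zero hdeg, coeff_iterate_derivative, zero_add, Nat.descFactorial_self,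
    nsmul_eq_mul]

theorem degree_iterate_derivative_X_sq_sub_one_pow {K : Type*} [Field K] [CharZero K] (k : ℕ) :
    (derivative^[k] ((X ^ 2 - 1 : K[X]) ^ k)).degree = k := by
  refine degree_eq_of_le_of_coeff_ne_zero (degree_le_of_natDegree_le ?_) ?_
  · have := natDegree_iterate_derivative ((X ^ 2 - 1 : K[X]) ^ k) k
    rw [natDegree_X_sq_sub_one_pow] at this
    omega
  · rw [coeff_iterate_derivative, show k + k = 2 * k by ring, coeff_X_sq_sub_one_pow_two_mul]
    simp [Nat.descFactorial_eq_zero_iff_lt, two_mul]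

theorem exists_eq_sum_C_mul_of_degree_lt {K : Type*} [Field K] {p : ℕ → K[X]}
    (hp : ∀ k, (p k).degree = k) (n : ℕ) {u : K[X]} (hu : u.degree < n) :
    ∃ b : ℕ → K, u = ∑ k ∈ range n, C (b k) * p k := by
  induction n generalizing u with
  | zero => exact ⟨0, by simpa using hu⟩
  | succ n ih =>
    have hpn : (p n).natDegree = n := natDegree_eq_of_degree_eq_some (hp n)
    have hcoeff : (p n).coeff n = (p n).leadingCoeff := by rw [leadingCoeff, hpn]
    have hlead : (p n).leadingCoeff ≠ 0 :=
      leadingCoeff_ne_zero.mpr fun h => by simpa [h] using hp n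
    set c := u.coeff n / (p n).leadingCoeff
    have hv : (u - C c * p n).degree < n := by
      rw [degree_lt_iff_coeff_zero]
      intro m hm
      rw [coeff_sub, coeff_C_mul]
      rcases hm.eq_or_lt with rfl | hm
      · rw [hcoeff, div_mul_cancel₀ _ hlead, sub_self]
      · rw [degree_lt_iff_coeff_zero] at hu
        rw [hu m (by exact_mod_cast hm), coeff_eq_zero_of_natDegree_lt (hpn.trans_lt hm),
          mul_zero, sub_zero]
    obtain ⟨b, hb⟩ := ih hv
    refine ⟨Function.update b n c, ?_⟩
    rw [sum_range_succ, Function.update_self,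
      sum_congr rfl fun k hk => by rw [Function.update_of_ne (mem_range.mp hk).ne], ← hb]
    ring

theorem integral_eval_mul_eval_derivative (a b : ℝ) (p q : ℝ[X]) :
    ∫ x in a..b, p.eval x * q.derivative.eval x =
      p.eval b * q.eval b - p.eval a * q.eval a - ∫ x in a..b, p.derivative.eval x * q.eval x :=
  integral_mul_deriv_eq_deriv_mul (fun x _ => p.hasDerivAt x) (fun x _ => q.hasDerivAt x)
    (p.derivative.continuous.intervalIntegrable _ _)
    (q.derivative.continuous.intervalIntegrable _ _)

theorem integral_eval_mul_eval_iterate_derivative {a b : ℝ} (p w : ℝ[X]) (n : ℕ)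
    (ha : ∀ i < n, (derivative^[i] w).eval a = 0)
    (hb : ∀ i < n, (derivative^[i] w).eval b = 0) :
    ∫ x in a..b, p.eval x * (derivative^[n] w).eval x =
      (-1) ^ n * ∫ x in a..b, (derivative^[n] p).eval x * w.eval x := by
  induction n generalizing p with
  | zero => simp
  | succ n ih =>
    rw [Function.iterate_succ_apply', integral_eval_mul_eval_derivative, ha n n.lt_succ_self,
      hb n n.lt_succ_self, ih (derivative p) (fun i hi => ha i (by omega))
      (fun i hi => hb i (by omega)), ← Function.iterate_succ_apply]
    ring

theorem integral_one_sub_sq_pow_succ (k : ℕ) :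
    ∫ x in (-1 : ℝ)..1, (1 - x ^ 2) ^ (k + 1) =
      (2 * k + 2) / (2 * k + 3 : ℝ) * ∫ x in (-1 : ℝ)..1, (1 - x ^ 2) ^ k := by
  have hibp := integral_eval_mul_eval_derivative (-1) 1 ((1 - X ^ 2) ^ (k + 1)) X
  have hintegrand : ∀ x : ℝ, (derivative ((1 - X ^ 2) ^ (k + 1))).eval x * x
      = (2 * k + 2) * ((1 - x ^ 2) ^ (k + 1) - (1 - x ^ 2) ^ k) := fun x => by
    simp only [derivative_pow, eval_mul, eval_pow, eval_C, eval_sub, eval_one, eval_X,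
      derivative_sub, derivative_one, derivative_X, eval_zero, add_tsub_cancel_right]
    push_cast
    ring
  have hint : ∀ m : ℕ,
      IntervalIntegrable (fun x : ℝ => (1 - x ^ 2) ^ m) MeasureTheory.volume (-1) 1 :=
    fun m => (by fun_prop : Continuous fun x : ℝ => (1 - x ^ 2) ^ m).intervalIntegrable _ _
  simp only [derivative_X, eval_one, mul_one, eval_pow, eval_sub, eval_X, one_pow,
    sub_self, zero_pow (Nat.succ_ne_zero k), zero_mul, neg_one_sq, zero_sub] at hibp
  rw [integral_congr fun x _ => hintegrand x, integral_const_mul,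
    integral_sub (hint _) (hint _)] at hibp
  field_simp
  linarith

theorem integral_one_sub_sq_pow (k : ℕ) :
    ∫ x in (-1 : ℝ)..1, (1 - x ^ 2) ^ k = 2 ^ (2 * k + 1) * (k ! : ℝ) ^ 2 / (2 * k + 1)! := by
  induction k with
  | zero => norm_num
  | succ k ih =>
    rw [integral_one_sub_sq_pow_succ, ih, show 2 * (k + 1) + 1 = 2 * k + 1 + 1 + 1 by ring]
    push_cast [Nat.factorial_succ]
    field_simp
    ring

noncomputable def legendre (k : ℕ) : ℝ[X] :=
  C (2 ^ k * k ! : ℝ)⁻¹ * derivative^[k] ((X ^ 2 - 1) ^ k)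

theorem legendre_eval_one (k : ℕ) : (legendre k).eval 1 = 1 := by
  rw [legendre, eval_mul, eval_C, eval_one_iterate_derivative_X_sq_sub_one_pow,
    mul_comm (k ! : ℝ), inv_mul_cancel₀ (by positivity)]

theorem legendre_eval_neg_one (k : ℕ) : (legendre k).eval (-1) = (-1) ^ k := by
  rw [legendre, eval_mul, eval_C, eval_neg_one_iterate_derivative_X_sq_sub_one_pow, neg_pow]
  field_simp

theorem degree_legendre (k : ℕ) : (legendre k).degree = k := by
  rw [legendre, degree_C_mul (by positivity), degree_iterate_derivative_X_sq_sub_one_pow]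

theorem integral_mul_legendre_eq (p : ℝ[X]) (k : ℕ) :
    ∫ x in (-1 : ℝ)..1, p.eval x * (legendre k).eval x =
      (-1) ^ k * (2 ^ k * k ! : ℝ)⁻¹ *
        ∫ x in (-1 : ℝ)..1, (derivative^[k] p).eval x * ((X ^ 2 - 1) ^ k : ℝ[X]).eval x := by
  simp_rw [legendre, eval_mul, eval_C, mul_left_comm (p.eval _), integral_const_mul]
  rw [integral_eval_mul_eval_iterate_derivative _ _ _
    (fun i hi => eval_iterate_derivative_X_sq_sub_one_pow_of_lt (by norm_num) hi)
    (fun i hi => eval_iterate_derivative_X_sq_sub_one_pow_of_lt (by norm_num) hi)]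
  ring

theorem integral_mul_legendre_of_degree_lt {p : ℝ[X]} {k : ℕ} (hp : p.degree < k) :
    ∫ x in (-1 : ℝ)..1, p.eval x * (legendre k).eval x = 0 := by
  rw [integral_mul_legendre_eq, iterate_derivative_eq_zero_of_degree_lt hp]
  simp

theorem integral_legendre_mul_legendre_of_ne {j k : ℕ} (h : j ≠ k) :
    ∫ x in (-1 : ℝ)..1, (legendre j).eval x * (legendre k).eval x = 0 := by
  rcases h.lt_or_gt with h | h
  · exact integral_mul_legendre_of_degree_lt (by rw [degree_legendre]; exact_mod_cast h)
  · simp_rw [mul_comm ((legendre j).eval _)]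
    exact integral_mul_legendre_of_degree_lt (by rw [degree_legendre]; exact_mod_cast h)

theorem iterate_derivative_legendre_self (k : ℕ) :
    derivative^[k] (legendre k) = C ((2 ^ k * k ! : ℝ)⁻¹ * (2 * k)!) := by
  rw [legendre, iterate_derivative_C_mul, ← Function.iterate_add_apply, ← two_mul,
    iterate_derivative_eq_C_of_natDegree_le (natDegree_X_sq_sub_one_pow k).le,
    coeff_X_sq_sub_one_pow_two_mul, mul_one, C_mul]

theorem integral_legendre_mul_legendre_self (k : ℕ) :
    ∫ x in (-1 : ℝ)..1, (legendre k).eval x * (legendre k).eval x = 2 / (2 * k + 1) := by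
  have hsign : ∫ x in (-1 : ℝ)..1, ((X ^ 2 - 1) ^ k : ℝ[X]).eval x =
      (-1) ^ k * ∫ x in (-1 : ℝ)..1, (1 - x ^ 2) ^ k := by
    rw [← integral_const_mul]
    refine integral_congr fun x _ => ?_
    simp only [eval_pow, eval_sub, eval_X, eval_one, ← mul_pow]
    ring
  simp_rw [integral_mul_legendre_eq, iterate_derivative_legendre_self, eval_C,
    integral_const_mul, hsign, integral_one_sub_sq_pow]
  have hsq : ((-1 : ℝ) ^ k) * (-1) ^ k = 1 := by rw [← mul_pow]; norm_num
  push_cast [Nat.factorial_succ]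
  field_simp
  linear_combination 2 ^ (2 * k + 1) * hsq

theorem integral_sq_eval_sum_C_mul_legendre (s : Finset ℕ) (b : ℕ → ℝ) :
    ∫ x in (-1 : ℝ)..1, (∑ k ∈ s, C (b k) * legendre k).eval x ^ 2 =
      ∑ k ∈ s, 2 / (2 * k + 1) * b k ^ 2 := by
  have hterm : ∀ j k,
      ∫ x in (-1 : ℝ)..1, b j * (legendre j).eval x * (b k * (legendre k).eval x) =
        b j * b k * ∫ x in (-1 : ℝ)..1, (legendre j).eval x * (legendre k).eval x := by
    intro j k
    rw [← integral_const_mul]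
    exact integral_congr fun x _ => by ring
  simp_rw [eval_finsetSum, eval_mul, eval_C, sq, sum_mul_sum]
  rw [integral_finsetSum fun j _ => (by fun_prop : Continuous _).intervalIntegrable _ _]
  refine sum_congr rfl fun j hj => ?_
  rw [integral_finsetSum fun k _ => (by fun_prop : Continuous _).intervalIntegrable _ _,
    sum_eq_single_of_mem j hj
      fun k _ hk => by rw [hterm, integral_legendre_mul_legendre_of_ne hk.symm, mul_zero],
    hterm, integral_legendre_mul_legendre_self]
  ring

theorem sq_sum_le_mul_sum_sq_div {ι : Type*} (s : Finset ι) (b : ι → ℝ) {w : ι → ℝ}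
    {c : ℝ} (hw : ∀ i ∈ s, 0 < w i) (hc : ∑ i ∈ s, w i ≤ c) :
    (∑ i ∈ s, b i) ^ 2 ≤ c * ∑ i ∈ s, b i ^ 2 / w i := by
  have hcs := sum_sq_le_sum_mul_sum_of_sq_le_mul s (fun i hi => (hw i hi).le)
    (fun i hi => div_nonneg (sq_nonneg (b i)) (hw i hi).le)
    (fun i hi => (mul_div_cancel₀ (b i ^ 2) (hw i hi).ne').ge)
  exact hcs.trans (mul_le_mul_of_nonneg_right hc
    (sum_nonneg fun i hi => div_nonneg (sq_nonneg (b i)) (hw i hi).le))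

theorem sum_filter_two_mul_add_one_le (p : ℕ → Prop) [DecidablePred p]
    (hp : ∀ k, p k → ¬p (k + 1)) (n : ℕ) :
    ∑ k ∈ range n with p k, (2 * k + 1 : ℝ) ≤ n * (n + 1) / 2 := by
  induction n using Nat.twoStepInduction with
  | zero => simp
  | one => by_cases h : p 0 <;> simp [sum_filter, h]
  | more n ih _ =>
    have hpair : (if p n then (2 * n + 1 : ℝ) else 0) +
        (if p (n + 1) then 2 * (n + 1 : ℝ) + 1 else 0) ≤ 2 * n + 3 := by
      by_cases h : p n
      · simp [h, hp n h]
      · split_ifs <;> linarith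
    rw [sum_filter, sum_range_succ, sum_range_succ, ← sum_filter]
    push_cast
    linarith

theorem sum_neg_one_pow_mul_eq_sub (s : Finset ℕ) (f : ℕ → ℝ) :
    ∑ k ∈ s, (-1) ^ k * f k =
      ∑ k ∈ s with Even k, f k - ∑ k ∈ s with ¬Even k, f k := by
  rw [← sum_filter_add_sum_filter_not s Even, sub_eq_add_neg, ← sum_neg_distrib]
  congr 1 <;> refine sum_congr rfl fun k hk => ?_
  · rw [(mem_filter.mp hk).2.neg_one_pow, one_mul]
  · rw [(Nat.not_even_iff_odd.mp (mem_filter.mp hk).2).neg_one_pow, neg_one_mul]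

theorem sq_sum_neg_one_pow_mul_add_sq_sum_le (n : ℕ) (b : ℕ → ℝ) :
    (∑ k ∈ range n, (-1) ^ k * b k) ^ 2 + (∑ k ∈ range n, b k) ^ 2 ≤
      n * (n + 1) / 2 * ∑ k ∈ range n, 2 / (2 * k + 1) * b k ^ 2 := by
  have hw : ∀ k ∈ range n, (0 : ℝ) < 2 * k + 1 := fun k _ => by positivity
  have heven := sq_sum_le_mul_sum_sq_div _ b (fun k hk => hw k (mem_filter.mp hk).1)
    (sum_filter_two_mul_add_one_le Even (fun k hk => by simpa [Nat.even_add_one] using hk) n)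
  have hodd := sq_sum_le_mul_sum_sq_div _ b (fun k hk => hw k (mem_filter.mp hk).1)
    (sum_filter_two_mul_add_one_le (¬Even ·) (fun k hk => by simpa [Nat.even_add_one] using hk) n)
  have hweights : ∑ k ∈ range n, 2 / (2 * k + 1) * b k ^ 2 =
      2 * (∑ k ∈ range n with Even k, b k ^ 2 / (2 * k + 1) +
        ∑ k ∈ range n with ¬Even k, b k ^ 2 / (2 * k + 1)) := by
    rw [sum_filter_add_sum_filter_not, mul_sum]
    exact sum_congr rfl fun k _ => by ring
  rw [sum_neg_one_pow_mul_eq_sub, ← sum_filter_add_sum_filter_not (range n) Even b, hweights]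
  linarith

/-- Trace inequality in 1D: for a polynomial of degree at most `N`,
`u(-1)^2 + u(1)^2 ≤ ((N+1)(N+2)/2) ∫_{-1}^1 u^2`. -/
theorem trace_inequality_1d (N : ℕ) (u : Polynomial ℝ) (hu : u.natDegree ≤ N) :
    (u.eval (-1)) ^ 2 + (u.eval 1) ^ 2 ≤
      (((N : ℝ) + 1) * ((N : ℝ) + 2) / 2) * ∫ x in (-1 : ℝ)..1, (u.eval x) ^ 2 := by
  have hdeg : u.degree < ↑(N + 1) :=
    (degree_le_of_natDegree_le hu).trans_lt (by exact_mod_cast N.lt_succ_self)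
  obtain ⟨b, rfl⟩ := exists_eq_sum_C_mul_of_degree_lt degree_legendre (N + 1) hdeg
  rw [integral_sq_eval_sum_C_mul_legendre]
  simp only [eval_finsetSum, eval_mul, eval_C, legendre_eval_one, legendre_eval_neg_one,
    mul_comm (b _), one_mul]
  convert sq_sum_neg_one_pow_mul_add_sq_sum_le (N + 1) b using 2
  push_cast
  ring
end

section
/- For real square matrices, decompose A = A^s + A^k with A^s = (A + Aᵀ)/2 symmetric and A^k = (A - Aᵀ)/2 skew-symmetric, and let M be symmetric positive definite. Then for every eigenvalue λ of M⁻¹A, λ_min(M⁻¹A^s) ≤ Re(λ) ≤ λ_max(M⁻¹A^s), where λ_min, λ_max denote the extreme (real) eigenvalues of the symmetric generalized eigenproblem A^s v = λ M v. -/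
/-!
If `M⁻¹A x = λ x` with `x ≠ 0`, then `x⋆ A x = λ (x⋆ M x)` with `x⋆ M x > 0`, and since `x⋆ Aᵀ x`
is the conjugate of `x⋆ A x`, taking real parts gives `Re λ = x⋆ Aˢ x / x⋆ M x`.
With `S = M^{1/2}`, the matrix `M⁻¹Aˢ` is similar to the symmetric `S⁻¹ Aˢ S⁻¹`, whose spectrum lies
in `[a, b]` exactly when `a • 1 ≤ S⁻¹ Aˢ S⁻¹ ≤ b • 1` in the Loewner order. Conjugating by `S` gives
`a • M ≤ Aˢ ≤ b • M`, which bounds the quotient `x⋆ Aˢ x / x⋆ M x` by `a` and `b`.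
-/

open Matrix
open scoped MatrixOrder ComplexOrder

namespace Matrix

variable {n : Type*}

theorem transpose_map_ofReal (P : Matrix n n ℝ) :
    Pᵀ.map (algebraMap ℝ ℂ) = (P.map (algebraMap ℝ ℂ))ᴴ := by
  rw [← conjTranspose_eq_transpose_of_trivial, conjTranspose_map _ fun _ => algebraMap_star_comm _]

variable [Fintype n]

theorem re_star_dotProduct_transpose_map_mulVec (P : Matrix n n ℝ) (x : n → ℂ) :
    (star x ⬝ᵥ Pᵀ.map (algebraMap ℝ ℂ) *ᵥ x).re = (star x ⬝ᵥ P.map (algebraMap ℝ ℂ) *ᵥ x).re := by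
  rw [transpose_map_ofReal, dotProduct_mulVec, ← star_mulVec, star_dotProduct, Complex.star_def,
    Complex.conj_re]

theorem re_star_dotProduct_smul_map_mulVec (r : ℝ) (P : Matrix n n ℝ) (x : n → ℂ) :
    (star x ⬝ᵥ (r • P).map (algebraMap ℝ ℂ) *ᵥ x).re =
      r * (star x ⬝ᵥ P.map (algebraMap ℝ ℂ) *ᵥ x).re := by
  rw [Matrix.map_smul _ r fun a => by simp, smul_mulVec, dotProduct_smul, Complex.real_smul,
    Complex.re_ofReal_mul]

variable [DecidableEq n]

theorem exists_mulVec_eq_smul_of_mem_spectrum {K : Type*} [Field K] {N : Matrix n n K} {μ : K}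
    (h : μ ∈ spectrum K N) : ∃ x ≠ 0, N *ᵥ x = μ • x := by
  rw [← spectrum_toLin', ← Module.End.hasEigenvalue_iff_mem_spectrum] at h
  obtain ⟨x, hx⟩ := h.exists_hasEigenvector
  exact ⟨x, hx.2, by simpa using hx.apply_eq_smul⟩

theorem mulVec_map_eq_smul_mulVec_map {R S : Type*} [CommRing R] [CommRing S] (f : R →+* S)
    {A M : Matrix n n R} (hM : IsUnit M.det) {x : n → S} {μ : S}
    (hx : (M⁻¹ * A).map f *ᵥ x = μ • x) : A.map f *ᵥ x = μ • (M.map f *ᵥ x) := by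
  simpa only [mulVec_mulVec, ← Matrix.map_mul, ← Matrix.mul_assoc, mul_nonsing_inv _ hM,
    Matrix.one_mul, mulVec_smul] using congrArg (M.map f *ᵥ ·) hx

section SqrtConjugate

variable {𝕜 : Type*} [RCLike 𝕜] {A M : Matrix n n 𝕜}

theorem isUnit_det_sqrt (hM : M.PosDef) : IsUnit (CFC.sqrt M).det :=
  (isUnit_iff_isUnit_det _).1 (CFC.isUnit_sqrt_iff_isStrictlyPositive.2 hM.isStrictlyPositive)

theorem spectrum_inv_mul_eq_spectrum_sqrt_conj (hM : M.PosDef) :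
    spectrum ℝ (M⁻¹ * A) = spectrum ℝ ((CFC.sqrt M)⁻¹ * A * (CFC.sqrt M)⁻¹) := by
  obtain ⟨u, hu⟩ := CFC.isUnit_sqrt_iff_isStrictlyPositive.2 hM.isStrictlyPositive
  have hS := isUnit_det_sqrt hM
  have hsimilar :
      M⁻¹ * A = (CFC.sqrt M)⁻¹ * ((CFC.sqrt M)⁻¹ * A * (CFC.sqrt M)⁻¹) * CFC.sqrt M := by
    conv_lhs => rw [← CFC.sqrt_mul_sqrt_self M hM.posSemidef.nonneg, mul_inv_rev]
    simp only [Matrix.mul_assoc, nonsing_inv_mul _ hS, Matrix.mul_one]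
  rw [hsimilar, ← hu, ← coe_units_inv, spectrum.units_conjugate']

theorem sqrt_mul_sqrt_conj_mul_sqrt (hM : M.PosDef) :
    CFC.sqrt M * ((CFC.sqrt M)⁻¹ * A * (CFC.sqrt M)⁻¹) * CFC.sqrt M = A := by
  have hS := isUnit_det_sqrt hM
  simp only [← Matrix.mul_assoc, mul_nonsing_inv _ hS, Matrix.one_mul]
  simp only [Matrix.mul_assoc, nonsing_inv_mul _ hS, Matrix.mul_one]

theorem le_smul_of_forall_mem_spectrum_inv_mul_le {c : ℝ} (hA : A.IsHermitian) (hM : M.PosDef)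
    (h : ∀ μ ∈ spectrum ℝ (M⁻¹ * A), μ ≤ c) : A ≤ c • M := by
  have hS : IsSelfAdjoint (CFC.sqrt M) := CFC.sqrt_nonneg M |>.isSelfAdjoint
  have hB : IsSelfAdjoint ((CFC.sqrt M)⁻¹ * A * (CFC.sqrt M)⁻¹) := by
    simpa [star_eq_conjTranspose, conjTranspose_nonsing_inv, hS.isHermitian.eq] using
      hA.isSelfAdjoint.conjugate' (CFC.sqrt M)⁻¹
  have hle := hS.conjugate_le_conjugate <| (le_algebraMap_iff_spectrum_le hB).2 <|
    spectrum_inv_mul_eq_spectrum_sqrt_conj hM ▸ h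
  rwa [sqrt_mul_sqrt_conj_mul_sqrt hM, Algebra.algebraMap_eq_smul_one, mul_smul_comm, smul_mul,
    mul_one, CFC.sqrt_mul_sqrt_self M hM.posSemidef.nonneg] at hle

theorem smul_le_of_forall_le_mem_spectrum_inv_mul {c : ℝ} (hA : A.IsHermitian) (hM : M.PosDef)
    (h : ∀ μ ∈ spectrum ℝ (M⁻¹ * A), c ≤ μ) : c • M ≤ A := by
  have hle := le_smul_of_forall_mem_spectrum_inv_mul_le (c := -c) hA.neg hM fun μ hμ => by
    rw [mul_neg, ← spectrum.neg_eq] at hμ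
    linarith [h (-μ) hμ]
  rwa [neg_smul, neg_le_neg_iff] at hle

end SqrtConjugate

section RealToComplex

variable {P Q : Matrix n n ℝ}

theorem PosSemidef.map_ofReal (hP : P.PosSemidef) : (P.map (algebraMap ℝ ℂ)).PosSemidef := by
  obtain ⟨X, rfl⟩ := CStarAlgebra.nonneg_iff_eq_star_mul_self.mp hP.nonneg
  rw [Matrix.map_mul, star_eq_conjTranspose, conjTranspose_eq_transpose_of_trivial,
    transpose_map_ofReal]
  exact posSemidef_conjTranspose_mul_self _

theorem PosDef.map_ofReal (hP : P.PosDef) : (P.map (algebraMap ℝ ℂ)).PosDef :=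
  hP.posSemidef.map_ofReal.posDef_iff_isUnit.2 (hP.isUnit.map (algebraMap ℝ ℂ).mapMatrix)

theorem re_star_dotProduct_map_mulVec_mono (hPQ : P ≤ Q) (x : n → ℂ) :
    (star x ⬝ᵥ P.map (algebraMap ℝ ℂ) *ᵥ x).re ≤ (star x ⬝ᵥ Q.map (algebraMap ℝ ℂ) *ᵥ x).re := by
  have hnonneg := (PosSemidef.map_ofReal hPQ).dotProduct_mulVec_nonneg x
  rw [Matrix.map_sub _ (map_sub _), sub_mulVec, dotProduct_sub] at hnonneg
  simpa using (Complex.nonneg_iff.1 hnonneg).1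

theorem re_star_dotProduct_symmPart_mulVec {A M : Matrix n n ℝ} (hM : M.PosDef) {x : n → ℂ}
    {μ : ℂ} (hx : (M⁻¹ * A).map (algebraMap ℝ ℂ) *ᵥ x = μ • x) :
    (star x ⬝ᵥ ((1 / 2 : ℝ) • (A + Aᵀ)).map (algebraMap ℝ ℂ) *ᵥ x).re =
      μ.re * (star x ⬝ᵥ M.map (algebraMap ℝ ℂ) *ᵥ x).re := by
  have hA : star x ⬝ᵥ A.map (algebraMap ℝ ℂ) *ᵥ x =
      μ * (star x ⬝ᵥ M.map (algebraMap ℝ ℂ) *ᵥ x) := by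
    rw [mulVec_map_eq_smul_mulVec_map _ hM.det_pos.ne'.isUnit hx, dotProduct_smul, smul_eq_mul]
  have hM_im : (star x ⬝ᵥ M.map (algebraMap ℝ ℂ) *ᵥ x).im = 0 :=
    hM.map_ofReal.isHermitian.im_star_dotProduct_mulVec_self x
  rw [re_star_dotProduct_smul_map_mulVec, Matrix.map_add _ (map_add _), add_mulVec, dotProduct_add,
    Complex.add_re, re_star_dotProduct_transpose_map_mulVec, hA, Complex.mul_re, hM_im]
  ring

end RealToComplex

end Matrix

/-- The real part of any eigenvalue of `M⁻¹A` (with `M` symmetric positive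
definite) is bounded by the extreme eigenvalues of `M⁻¹A^s`, where
`A^s = (A + Aᵀ)/2` is the symmetric part of `A`. -/
theorem re_spectrum_bounded_by_symmetric_part (n : ℕ)
    (A M : Matrix (Fin n) (Fin n) ℝ) (hM : M.PosDef) :
    ∀ lam ∈ spectrum ℂ ((M⁻¹ * A).map (algebraMap ℝ ℂ)),
      sInf (spectrum ℝ (M⁻¹ * ((1 / 2 : ℝ) • (A + Aᵀ)))) ≤ lam.re ∧
      lam.re ≤ sSup (spectrum ℝ (M⁻¹ * ((1 / 2 : ℝ) • (A + Aᵀ)))) := by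
  intro lam hlam
  obtain ⟨x, hx0, hx⟩ := exists_mulVec_eq_smul_of_mem_spectrum hlam
  have hAs : ((1 / 2 : ℝ) • (A + Aᵀ)).IsHermitian := by simp [IsHermitian, add_comm]
  have hMx := (Complex.pos_iff.1 (hM.map_ofReal.dotProduct_mulVec_pos hx0)).1
  have hre := re_star_dotProduct_symmPart_mulVec hM hx
  have hfin := (M⁻¹ * ((1 / 2 : ℝ) • (A + Aᵀ))).finite_real_spectrum
  constructor
  · have hle := re_star_dotProduct_map_mulVec_mono (smul_le_of_forall_le_mem_spectrum_inv_mul hAs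
      hM fun μ hμ => csInf_le hfin.bddBelow hμ) x
    rw [re_star_dotProduct_smul_map_mulVec _ M, hre] at hle
    exact le_of_mul_le_mul_right hle hMx
  · have hle := re_star_dotProduct_map_mulVec_mono (le_smul_of_forall_mem_spectrum_inv_mul_le hAs
      hM fun μ hμ => le_csSup hfin.bddAbove hμ) x
    rw [re_star_dotProduct_smul_map_mulVec _ M, hre] at hle
    exact le_of_mul_le_mul_right hle hMx
end

section
/- For a real square matrix A with skew-symmetric part A^k = (A - Aᵀ)/2 and M symmetric positive definite, every eigenvalue λ of M⁻¹A satisfies |Im(λ)| ≤ ρ(M⁻¹A^k), where ρ denotes spectral radius. -/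
/-!
If `A v = λ M v` with `v ≠ 0`, split `A = S + K` into its symmetric and skew parts. Since
`v* M v > 0` and `v* S v` are real, `Im λ · v* M v = Im (v* K v)`. Write `M = R²` with `R = M^{1/2}`
and `w = R v`: then `v* K v = w* G w` for `G = R⁻¹ K R⁻¹`, which is skew-Hermitian, hence normal,
so its operator norm is its spectral radius; and `G = R (M⁻¹ K) R⁻¹` has the spectrum of `M⁻¹ K`.
Hence `|v* K v| ≤ ρ(M⁻¹ K) ‖w‖² = ρ(M⁻¹ K) · v* M v`.
-/

open Matrix

open scoped ComplexOrder

namespace Matrix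

variable {n : Type*} [Fintype n]

theorem IsHermitian.star_dotProduct_mul_mul_mulVec {α : Type*} [CommRing α] [StarRing α]
    {R : Matrix n n α} (hR : R.IsHermitian) (N : Matrix n n α) (v : n → α) :
    star v ⬝ᵥ ((R * N * R) *ᵥ v) = star (R *ᵥ v) ⬝ᵥ (N *ᵥ (R *ᵥ v)) := by
  rw [star_mulVec, hR.eq, ← dotProduct_mulVec, mulVec_mulVec, mulVec_mulVec, Matrix.mul_assoc]

theorem im_mul_re_eq_im_star_dotProduct_mulVec {S K M : Matrix n n ℂ} (hS : S.IsHermitian)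
    (hM : M.IsHermitian) {μ : ℂ} {v : n → ℂ} (h : (S + K) *ᵥ v = μ • (M *ᵥ v)) :
    μ.im * (star v ⬝ᵥ (M *ᵥ v)).re = (star v ⬝ᵥ (K *ᵥ v)).im := by
  have hv := congrArg (fun w => (star v ⬝ᵥ w).im) h
  have hSv := hS.im_star_dotProduct_mulVec_self v
  have hMv := hM.im_star_dotProduct_mulVec_self v
  simp only [RCLike.im_to_complex] at hSv hMv
  simp only [add_mulVec, dotProduct_add, dotProduct_smul, smul_eq_mul, Complex.add_im,
    Complex.mul_im, hSv, hMv] at hv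
  linarith

variable [DecidableEq n]

section L2

open scoped Norms.L2Operator

theorem norm_star_dotProduct_mulVec_le (G : Matrix n n ℂ) (w : n → ℂ) :
    ‖star w ⬝ᵥ (G *ᵥ w)‖ ≤ ‖G‖ * (star w ⬝ᵥ w).re := by
  have hGw : star w ⬝ᵥ (G *ᵥ w) = inner ℂ (WithLp.toLp 2 w) (WithLp.toLp 2 (G *ᵥ w)) := by
    rw [EuclideanSpace.inner_toLp_toLp, dotProduct_comm]
  have hw : (star w ⬝ᵥ w).re = ‖WithLp.toLp 2 w‖ ^ 2 := by
    rw [← inner_self_eq_norm_sq (𝕜 := ℂ), EuclideanSpace.inner_toLp_toLp, dotProduct_comm]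
    rfl
  rw [hGw, hw]
  calc _ ≤ ‖WithLp.toLp 2 w‖ * ‖WithLp.toLp 2 (G *ᵥ w)‖ := norm_inner_le_norm _ _
    _ ≤ ‖WithLp.toLp 2 w‖ * (‖G‖ * ‖WithLp.toLp 2 w‖) := by
        gcongr; exact G.l2_opNorm_mulVec (WithLp.toLp 2 w)
    _ = ‖G‖ * ‖WithLp.toLp 2 w‖ ^ 2 := by ring

theorem ofReal_norm_star_dotProduct_mulVec_le_spectralRadius (G : Matrix n n ℂ) [IsStarNormal G]
    (w : n → ℂ) :
    ENNReal.ofReal ‖star w ⬝ᵥ (G *ᵥ w)‖ ≤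
      spectralRadius ℂ G * ENNReal.ofReal (star w ⬝ᵥ w).re := by
  rw [IsStarNormal.spectralRadius_eq_nnnorm, ← ENNReal.ofReal_coe_nnreal, coe_nnnorm,
    ← ENNReal.ofReal_mul (norm_nonneg _)]
  exact ENNReal.ofReal_le_ofReal (norm_star_dotProduct_mulVec_le G w)

end L2

theorem map_nonsing_inv {α β : Type*} [CommRing α] [CommRing β] (f : α →+* β)
    {M : Matrix n n α} (h : IsUnit M.det) : M⁻¹.map f = (M.map f)⁻¹ :=
  (inv_eq_left_inv (by
    rw [← RingHom.mapMatrix_apply, ← RingHom.mapMatrix_apply, ← map_mul, nonsing_inv_mul _ h,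
      map_one])).symm

theorem exists_mulVec_eq_smul_mulVec_of_mem_spectrum {K : Type*} [Field K] {A M : Matrix n n K}
    (hM : IsUnit M) {μ : K} (hμ : μ ∈ spectrum K (M⁻¹ * A)) :
    ∃ v ≠ 0, A *ᵥ v = μ • (M *ᵥ v) := by
  rw [spectrum.mem_iff, isUnit_iff_isUnit_det, isUnit_iff_ne_zero, not_not] at hμ
  obtain ⟨v, hv0, hv⟩ := exists_mulVec_eq_zero_iff.mpr hμ
  refine ⟨v, hv0, ?_⟩
  rw [sub_mulVec, sub_eq_zero, Algebra.algebraMap_eq_smul_one, smul_mulVec, one_mulVec] at hv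
  rw [← mulVec_smul, hv, mulVec_mulVec,
    mul_nonsing_inv_cancel_left _ _ ((isUnit_iff_isUnit_det M).mp hM)]

theorem spectrum_inv_mul_eq_of_mul_self {K : Type*} [Field K] {R M : Matrix n n K}
    (hR : IsUnit R) (hRM : R * R = M) (B : Matrix n n K) :
    spectrum K (M⁻¹ * B) = spectrum K (R⁻¹ * B * R⁻¹) := by
  have hRdet := (isUnit_iff_isUnit_det R).mp hR
  rw [← spectrum.units_conjugate (u := hR.unit)]
  congr 1
  rw [Matrix.coe_units_inv, IsUnit.unit_spec, ← hRM, Matrix.mul_inv_rev]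
  simp only [← Matrix.mul_assoc, mul_nonsing_inv _ hRdet, Matrix.one_mul]

open scoped MatrixOrder in
theorem PosDef.exists_isHermitian_isUnit_mul_self {𝕜 : Type*} [RCLike 𝕜] {M : Matrix n n 𝕜}
    (hM : M.PosDef) : ∃ R : Matrix n n 𝕜, R.IsHermitian ∧ IsUnit R ∧ R * R = M := by
  have hM0 : 0 ≤ M := nonneg_iff_posSemidef.mpr hM.posSemidef
  exact ⟨CFC.sqrt M, (nonneg_iff_posSemidef.mp (CFC.sqrt_nonneg M)).isHermitian,
    (CFC.isUnit_sqrt_iff M).mpr hM.isUnit, CFC.sqrt_mul_sqrt_self M⟩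

theorem PosDef.map_algebraMap {𝕜 : Type*} [RCLike 𝕜] {M : Matrix n n ℝ} (hM : M.PosDef) :
    (M.map (algebraMap ℝ 𝕜)).PosDef := by
  obtain ⟨R, hR, hRu, rfl⟩ := hM.exists_isHermitian_isUnit_mul_self
  have hRc : (R.map (algebraMap ℝ 𝕜))ᴴ = R.map (algebraMap ℝ 𝕜) := by
    rw [← conjTranspose_map _ fun x => (RCLike.conj_ofReal x).symm, hR.eq]
  have hRcu : IsUnit (R.map (algebraMap ℝ 𝕜)) := hRu.map (algebraMap ℝ 𝕜).mapMatrix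
  rw [Matrix.map_mul]
  nth_rewrite 1 [← hRc]
  exact PosDef.conjTranspose_mul_self _ (mulVec_injective_iff_isUnit.mpr hRcu)

theorem PosDef.ofReal_norm_star_dotProduct_mulVec_le_spectralRadius {M K : Matrix n n ℂ}
    (hM : M.PosDef) (hK : Kᴴ = -K) (v : n → ℂ) :
    ENNReal.ofReal ‖star v ⬝ᵥ (K *ᵥ v)‖ ≤
      spectralRadius ℂ (M⁻¹ * K) * ENNReal.ofReal (star v ⬝ᵥ (M *ᵥ v)).re := by
  obtain ⟨R, hRh, hRu, rfl⟩ := hM.exists_isHermitian_isUnit_mul_self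
  have hRdet := (isUnit_iff_isUnit_det R).mp hRu
  set G := R⁻¹ * K * R⁻¹ with hG
  have hGskew : G ∈ skewAdjoint (Matrix n n ℂ) := by
    rw [skewAdjoint.mem_iff, star_eq_conjTranspose, hG, conjTranspose_mul, conjTranspose_mul,
      hRh.inv.eq, hK, Matrix.neg_mul, Matrix.mul_neg, Matrix.mul_assoc]
  have : IsStarNormal G := skewAdjoint.isStarNormal_of_mem hGskew
  have hKG : K = R * G * R := by
    rw [hG, ← Matrix.mul_assoc, mul_nonsing_inv_cancel_left _ _ hRdet,
      nonsing_inv_mul_cancel_right _ _ hRdet]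
  have hρ : spectralRadius ℂ ((R * R)⁻¹ * K) = spectralRadius ℂ G := by
    rw [spectralRadius, spectrum_inv_mul_eq_of_mul_self hRu rfl, spectralRadius]
  have hRR : star v ⬝ᵥ ((R * R) *ᵥ v) = star (R *ᵥ v) ⬝ᵥ (R *ᵥ v) := by
    simpa using hRh.star_dotProduct_mul_mul_mulVec 1 v
  rw [hρ, hRR, hKG, hRh.star_dotProduct_mul_mul_mulVec]
  exact Matrix.ofReal_norm_star_dotProduct_mulVec_le_spectralRadius G (R *ᵥ v)

theorem PosDef.ofReal_abs_im_le_spectralRadius {S K M : Matrix n n ℂ} (hM : M.PosDef)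
    (hS : S.IsHermitian) (hK : Kᴴ = -K) {μ : ℂ} (hμ : μ ∈ spectrum ℂ (M⁻¹ * (S + K))) :
    ENNReal.ofReal |μ.im| ≤ spectralRadius ℂ (M⁻¹ * K) := by
  obtain ⟨v, hv0, hv⟩ := exists_mulVec_eq_smul_mulVec_of_mem_spectrum hM.isUnit hμ
  set r := (star v ⬝ᵥ (M *ᵥ v)).re
  have hr : 0 < r := (Complex.pos_iff.mp (hM.dotProduct_mulVec_pos hv0)).1
  have him := im_mul_re_eq_im_star_dotProduct_mulVec hS hM.isHermitian hv
  have hle : ENNReal.ofReal |μ.im| * ENNReal.ofReal r ≤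
      spectralRadius ℂ (M⁻¹ * K) * ENNReal.ofReal r :=
    calc ENNReal.ofReal |μ.im| * ENNReal.ofReal r
        = ENNReal.ofReal |(star v ⬝ᵥ (K *ᵥ v)).im| := by
          rw [← ENNReal.ofReal_mul (abs_nonneg _), ← him, abs_mul, abs_of_pos hr]
      _ ≤ ENNReal.ofReal ‖star v ⬝ᵥ (K *ᵥ v)‖ :=
          ENNReal.ofReal_le_ofReal (Complex.abs_im_le_norm _)
      _ ≤ spectralRadius ℂ (M⁻¹ * K) * ENNReal.ofReal r :=
          hM.ofReal_norm_star_dotProduct_mulVec_le_spectralRadius hK v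
  exact (ENNReal.mul_le_mul_iff_left (ENNReal.ofReal_pos.mpr hr).ne' ENNReal.ofReal_ne_top).mp hle

end Matrix

/-- The imaginary part of any eigenvalue of `M⁻¹A` (with `M` symmetric positive
definite) is bounded in modulus by the spectral radius of `M⁻¹A^k`, where
`A^k = (A - Aᵀ)/2` is the skew-symmetric part of `A`. -/
theorem im_spectrum_bounded_by_skew_part (n : ℕ)
    (A M : Matrix (Fin n) (Fin n) ℝ) (hM : M.PosDef) :
    ∀ lam ∈ spectrum ℂ ((M⁻¹ * A).map (algebraMap ℝ ℂ)),
      ENNReal.ofReal |lam.im| ≤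
        spectralRadius ℂ ((M⁻¹ * ((1 / 2 : ℝ) • (A - Aᵀ))).map (algebraMap ℝ ℂ)) := by
  intro lam hlam
  set c := algebraMap ℝ ℂ
  have hmap : ∀ X, (M⁻¹ * X).map c = (M.map c)⁻¹ * X.map c := fun X => by
    rw [Matrix.map_mul, map_nonsing_inv c ((isUnit_iff_isUnit_det M).mp hM.isUnit)]
  have hc : Function.Semiconj c star star := fun x => (Complex.conj_ofReal x).symm
  have hS : (((1 / 2 : ℝ) • (A + Aᵀ)).map c).IsHermitian := by
    refine IsHermitian.map ?_ c hc
    simp [IsHermitian, add_comm]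
  have hK : (((1 / 2 : ℝ) • (A - Aᵀ)).map c)ᴴ = -((1 / 2 : ℝ) • (A - Aᵀ)).map c := by
    rw [← conjTranspose_map c hc, ← Matrix.map_neg c (map_neg c)]
    simp [← smul_neg]
  have hA : A.map c = ((1 / 2 : ℝ) • (A + Aᵀ)).map c + ((1 / 2 : ℝ) • (A - Aᵀ)).map c := by
    rw [← Matrix.map_add c (map_add c), ← smul_add, add_add_sub_cancel, ← two_smul ℝ A, smul_smul]
    norm_num
  rw [hmap, hA] at hlam
  rw [hmap]
  exact hM.map_algebraMap.ofReal_abs_im_le_spectralRadius hS hK hlam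
end

section
/- Let M be symmetric positive definite and Z real skew-symmetric. Then the spectral radius of M⁻¹Z equals max over nonzero f,g of 2 gᵀ Z f / (fᵀMf + gᵀMg). -/
/-!
Write `x = f + i g`. As `M` is symmetric and `Z` skew-symmetric, `x⋆ Z x = -2i gᵀZf` and
`x⋆ M x = fᵀMf + gᵀMg`. If `x` is an eigenvector of `M⁻¹Z` for an eigenvalue `μ` of maximal
modulus, then `Z x = μ M x` gives `|2 gᵀZf| = |μ| (fᵀMf + gᵀMg)`, and replacing `g` by `-g` if
necessary makes the quotient equal to `|μ|`. Conversely, factor `M = SᵀS`: the matrix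
`B = S⁻ᵀ Z S⁻¹` is skew, hence normal, so its `ℓ²` operator norm is its spectral radius, which is
that of the similar matrix `M⁻¹Z`. Hence `|x⋆ Z x| = |(Sx)⋆ B (Sx)| ≤ ρ ‖Sx‖² = ρ x⋆ M x`.
-/

open Matrix
open scoped ENNReal

variable {ι : Type*} [Fintype ι]

namespace Matrix

lemma dotProduct_mulVec_eq_neg_of_transpose_eq_neg {B : Matrix ι ι ℝ} (hB : Bᵀ = -B)
    (u v : ι → ℝ) : u ⬝ᵥ B *ᵥ v = -(v ⬝ᵥ B *ᵥ u) := by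
  rw [← dotProduct_transpose_mulVec, hB, neg_mulVec, dotProduct_neg]

lemma star_dotProduct_map_mulVec (A : Matrix ι ι ℝ) (u v : ι → ℝ) :
    star (fun i => (⟨u i, v i⟩ : ℂ)) ⬝ᵥ A.map (algebraMap ℝ ℂ) *ᵥ (fun i => ⟨u i, v i⟩) =
      ⟨u ⬝ᵥ A *ᵥ u + v ⬝ᵥ A *ᵥ v, u ⬝ᵥ A *ᵥ v - v ⬝ᵥ A *ᵥ u⟩ := by
  apply Complex.ext
  · simp only [dotProduct, mulVec, Complex.re_sum, Pi.star_apply, map_apply, Complex.mul_re]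
    simp [Finset.mul_sum, Finset.sum_add_distrib]
  · simp only [dotProduct, mulVec, Complex.im_sum, Pi.star_apply, map_apply, Complex.mul_im]
    simp [Finset.mul_sum, Finset.sum_add_distrib, sub_eq_add_neg]

lemma star_dotProduct_map_mulVec_of_transpose_eq_neg {B : Matrix ι ι ℝ} (hB : Bᵀ = -B)
    (u v : ι → ℝ) :
    star (fun i => (⟨u i, v i⟩ : ℂ)) ⬝ᵥ B.map (algebraMap ℝ ℂ) *ᵥ (fun i => ⟨u i, v i⟩) =
      ⟨0, -(2 * (v ⬝ᵥ B *ᵥ u))⟩ := by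
  have hu := dotProduct_mulVec_eq_neg_of_transpose_eq_neg hB u u
  have hv := dotProduct_mulVec_eq_neg_of_transpose_eq_neg hB v v
  rw [star_dotProduct_map_mulVec, dotProduct_mulVec_eq_neg_of_transpose_eq_neg hB u v]
  congr 1 <;> linarith

lemma IsSymm.star_dotProduct_map_mulVec {M : Matrix ι ι ℝ} (hM : M.IsSymm)
    (u v : ι → ℝ) :
    star (fun i => (⟨u i, v i⟩ : ℂ)) ⬝ᵥ M.map (algebraMap ℝ ℂ) *ᵥ (fun i => ⟨u i, v i⟩) =
      (u ⬝ᵥ M *ᵥ u + v ⬝ᵥ M *ᵥ v : ℝ) := by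
  rw [Matrix.star_dotProduct_map_mulVec, ← dotProduct_transpose_mulVec M u v, hM.eq, sub_self]
  rfl

lemma norm_toLp_sq_eq_dotProduct_add (u v : ι → ℝ) :
    ‖WithLp.toLp 2 (fun i => (⟨u i, v i⟩ : ℂ))‖ ^ 2 = u ⬝ᵥ u + v ⬝ᵥ v := by
  simp [EuclideanSpace.norm_sq_eq, Complex.sq_norm, Complex.normSq_mk, dotProduct,
    Finset.sum_add_distrib]

lemma PosDef.dotProduct_mulVec_add_pos {M : Matrix ι ι ℝ} (hM : M.PosDef) {f g : ι → ℝ}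
    (hfg : f ≠ 0 ∨ g ≠ 0) : 0 < f ⬝ᵥ M *ᵥ f + g ⬝ᵥ M *ᵥ g := by
  have hpos := fun (w : ι → ℝ) (hw : w ≠ 0) => by simpa using hM.dotProduct_mulVec_pos hw
  have hnonneg := fun (w : ι → ℝ) => by simpa using hM.posSemidef.dotProduct_mulVec_nonneg w
  rcases hfg with hf | hg
  · linarith [hpos f hf, hnonneg g]
  · linarith [hnonneg f, hpos g hg]

variable [DecidableEq ι]

open scoped Matrix.Norms.L2Operator in
lemma spectralRadius_ne_top [Nonempty ι] (A : Matrix ι ι ℂ) : spectralRadius ℂ A ≠ ∞ :=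
  ((spectrum.spectralRadius_le_nnnorm A).trans_lt ENNReal.coe_lt_top).ne

open scoped Matrix.Norms.L2Operator in
lemma exists_mulVec_eq_smul_norm_eq_spectralRadius [Nonempty ι] (A : Matrix ι ι ℂ) :
    ∃ μ : ℂ, ‖μ‖ = (spectralRadius ℂ A).toReal ∧ ∃ x ≠ 0, A *ᵥ x = μ • x := by
  obtain ⟨μ, hμ, hμA⟩ := spectrum.exists_nnnorm_eq_spectralRadius A
  rw [← spectrum_toLin', ← Module.End.hasEigenvalue_iff_mem_spectrum] at hμ
  obtain ⟨x, hx⟩ := hμ.exists_hasEigenvector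
  exact ⟨μ, by rw [← hμA]; rfl, x, hx.2, by simpa using hx.apply_eq_smul⟩

open scoped Matrix.Norms.L2Operator in
lemma norm_star_dotProduct_mulVec_le_s13 (N : Matrix ι ι ℂ) [IsStarNormal N] (x : ι → ℂ) :
    ‖star x ⬝ᵥ N *ᵥ x‖ ≤ (spectralRadius ℂ N).toReal * ‖WithLp.toLp 2 x‖ ^ 2 :=
  calc ‖star x ⬝ᵥ N *ᵥ x‖ = ‖inner ℂ (WithLp.toLp 2 x) (WithLp.toLp 2 (N *ᵥ x))‖ := by
        rw [EuclideanSpace.inner_toLp_toLp, dotProduct_comm]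
    _ ≤ ‖WithLp.toLp 2 x‖ * ‖WithLp.toLp 2 (N *ᵥ x)‖ := norm_inner_le_norm _ _
    _ ≤ ‖WithLp.toLp 2 x‖ * (‖N‖ * ‖WithLp.toLp 2 x‖) := by
        gcongr; exact N.l2_opNorm_mulVec _
    _ = (spectralRadius ℂ N).toReal * ‖WithLp.toLp 2 x‖ ^ 2 := by
        rw [IsStarNormal.spectralRadius_eq_nnnorm, ENNReal.coe_toReal, coe_nnnorm]; ring

lemma spectrum_map_nonsing_inv_mul_mul {K L : Type*} [Field K] [Field L] [Algebra K L]
    {S : Matrix ι ι K} (hS : IsUnit S) (A : Matrix ι ι K) :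
    spectrum L ((S⁻¹ * A * S).map (algebraMap K L)) = spectrum L (A.map (algebraMap K L)) := by
  let U := Units.map (algebraMap K L).mapMatrix.toMonoidHom hS.unit
  have hU : (S⁻¹ * A * S).map (algebraMap K L) =
      (↑U⁻¹ : Matrix ι ι L) * A.map (algebraMap K L) * U := by
    simp [U, Matrix.map_mul, Matrix.coe_units_inv]
  rw [hU, spectrum.units_conjugate']

open scoped MatrixOrder Matrix.Norms.L2Operator in
lemma PosDef.exists_isUnit_eq_transpose_mul_self {M : Matrix ι ι ℝ} (hM : M.PosDef) :
    ∃ S : Matrix ι ι ℝ, IsUnit S ∧ M = Sᵀ * S :=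
  CStarAlgebra.isStrictlyPositive_iff_eq_star_mul_self.mp hM.isStrictlyPositive

lemma abs_two_mul_dotProduct_mulVec_le_of_transpose_eq_neg {B : Matrix ι ι ℝ} (hB : Bᵀ = -B)
    (u v : ι → ℝ) :
    |2 * (v ⬝ᵥ B *ᵥ u)| ≤
      (spectralRadius ℂ (B.map (algebraMap ℝ ℂ))).toReal * (u ⬝ᵥ u + v ⬝ᵥ v) := by
  have hstar : star (B.map (algebraMap ℝ ℂ)) = -B.map (algebraMap ℝ ℂ) := by
    rw [star_eq_conjTranspose, ← conjTranspose_map _ fun x => by simp,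
      conjTranspose_eq_transpose_of_trivial, hB, Matrix.map_neg _ (map_neg _)]
  have : IsStarNormal (B.map (algebraMap ℝ ℂ)) := ⟨hstar ▸ (Commute.refl _).neg_left⟩
  have h := norm_star_dotProduct_mulVec_le_s13 (B.map (algebraMap ℝ ℂ)) fun i => ⟨u i, v i⟩
  rwa [star_dotProduct_map_mulVec_of_transpose_eq_neg hB, norm_toLp_sq_eq_dotProduct_add,
    ← (Complex.abs_im_eq_norm.mpr rfl), abs_neg] at h

lemma PosDef.abs_two_mul_dotProduct_mulVec_le {M Z : Matrix ι ι ℝ} (hM : M.PosDef)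
    (hZ : Zᵀ = -Z) (f g : ι → ℝ) :
    |2 * (g ⬝ᵥ Z *ᵥ f)| ≤ (spectralRadius ℂ ((M⁻¹ * Z).map (algebraMap ℝ ℂ))).toReal *
      (f ⬝ᵥ M *ᵥ f + g ⬝ᵥ M *ᵥ g) := by
  obtain ⟨S, hS, rfl⟩ := hM.exists_isUnit_eq_transpose_mul_self
  have hSdet : IsUnit S.det := (isUnit_iff_isUnit_det S).mp hS
  set B := S⁻¹ᵀ * Z * S⁻¹ with hBdef
  have hB : Bᵀ = -B := by simp [hBdef, transpose_mul, hZ, Matrix.mul_assoc]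
  have hsim : (Sᵀ * S)⁻¹ * Z = S⁻¹ * B * S := by
    rw [hBdef, Matrix.mul_inv_rev, ← transpose_nonsing_inv, Matrix.mul_assoc S⁻¹ _ S,
      nonsing_inv_mul_cancel_right _ _ hSdet, Matrix.mul_assoc]
  have hquad (w : ι → ℝ) : w ⬝ᵥ (Sᵀ * S) *ᵥ w = S *ᵥ w ⬝ᵥ S *ᵥ w := by
    rw [← mulVec_mulVec, dotProduct_transpose_mulVec]
  have hcross : g ⬝ᵥ Z *ᵥ f = S *ᵥ g ⬝ᵥ B *ᵥ S *ᵥ f := by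
    rw [hBdef, mulVec_mulVec, nonsing_inv_mul_cancel_right _ _ hSdet, ← mulVec_mulVec,
      dotProduct_transpose_mulVec, mulVec_mulVec, nonsing_inv_mul _ hSdet, one_mulVec,
      dotProduct_comm]
  rw [hsim, spectralRadius, spectrum_map_nonsing_inv_mul_mul hS, ← spectralRadius, hquad f,
    hquad g, hcross]
  exact abs_two_mul_dotProduct_mulVec_le_of_transpose_eq_neg hB _ _

lemma PosDef.exists_two_mul_dotProduct_mulVec_eq [Nonempty ι] {M Z : Matrix ι ι ℝ}
    (hM : M.PosDef) (hZ : Zᵀ = -Z) :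
    ∃ f g : ι → ℝ, (f ≠ 0 ∨ g ≠ 0) ∧
      2 * (g ⬝ᵥ Z *ᵥ f) = (spectralRadius ℂ ((M⁻¹ * Z).map (algebraMap ℝ ℂ))).toReal *
        (f ⬝ᵥ M *ᵥ f + g ⬝ᵥ M *ᵥ g) := by
  obtain ⟨μ, hμ, x, hx0, hx⟩ :=
    exists_mulVec_eq_smul_norm_eq_spectralRadius ((M⁻¹ * Z).map (algebraMap ℝ ℂ))
  set f : ι → ℝ := fun i => (x i).re
  set g : ι → ℝ := fun i => (x i).im
  have hxfg : x = fun i => ⟨f i, g i⟩ := funext fun i => (Complex.eta _).symm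
  have hfg : f ≠ 0 ∨ g ≠ 0 := by
    by_contra! h
    exact hx0 (funext fun i => Complex.ext (congrFun h.1 i) (congrFun h.2 i))
  have hZx : Z.map (algebraMap ℝ ℂ) *ᵥ x = μ • M.map (algebraMap ℝ ℂ) *ᵥ x := by
    rw [← mul_nonsing_inv_cancel_left (A := M) Z ((isUnit_iff_isUnit_det M).mp hM.isUnit),
      Matrix.map_mul, ← mulVec_mulVec, hx, mulVec_smul]
  have hquot := congrArg (star x ⬝ᵥ ·) hZx
  simp only [dotProduct_smul, smul_eq_mul] at hquot
  rw [hxfg, star_dotProduct_map_mulVec_of_transpose_eq_neg hZ,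
    (isHermitian_iff_isSymm.mp hM.isHermitian).star_dotProduct_map_mulVec] at hquot
  have habs : |2 * (g ⬝ᵥ Z *ᵥ f)| = (spectralRadius ℂ ((M⁻¹ * Z).map (algebraMap ℝ ℂ))).toReal *
      (f ⬝ᵥ M *ᵥ f + g ⬝ᵥ M *ᵥ g) := by
    have := congrArg norm hquot
    rwa [← Complex.abs_im_eq_norm.mpr rfl, abs_neg, norm_mul, hμ, Complex.norm_real,
      Real.norm_of_nonneg (hM.dotProduct_mulVec_add_pos hfg).le] at this
  rcases le_total 0 (g ⬝ᵥ Z *ᵥ f) with hnonneg | hnonpos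
  · exact ⟨f, g, hfg, by rw [← habs, abs_of_nonneg (by linarith)]⟩
  · refine ⟨f, -g, hfg.imp id neg_ne_zero.mpr, ?_⟩
    simp only [neg_dotProduct, mulVec_neg, dotProduct_neg, neg_neg]
    rw [← habs, abs_of_nonpos (by linarith)]
    ring

end Matrix

/-- For `M` symmetric positive definite and `Z` real skew-symmetric, the
spectral radius of `M⁻¹Z` equals `max_{(f,g) ≠ 0} 2 gᵀ Z f / (fᵀMf + gᵀMg)`. -/
theorem spectralRadius_skew_characterization (n : ℕ) (hn : 0 < n)
    (M Z : Matrix (Fin n) (Fin n) ℝ) (hM : M.PosDef) (hZ : Zᵀ = -Z) :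
    ∃ c : ℝ,
      IsGreatest
        {x : ℝ | ∃ f g : Fin n → ℝ, (f ≠ 0 ∨ g ≠ 0) ∧
          x = 2 * (g ⬝ᵥ (Z *ᵥ f)) / (f ⬝ᵥ (M *ᵥ f) + g ⬝ᵥ (M *ᵥ g))} c ∧
      spectralRadius ℂ ((M⁻¹ * Z).map (algebraMap ℝ ℂ)) = ENNReal.ofReal c := by
  have : Nonempty (Fin n) := ⟨⟨0, hn⟩⟩
  refine ⟨_, ⟨?_, ?_⟩, (ENNReal.ofReal_toReal (spectralRadius_ne_top _)).symm⟩
  · obtain ⟨f, g, hfg, heq⟩ := hM.exists_two_mul_dotProduct_mulVec_eq hZ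
    exact ⟨f, g, hfg, by rw [heq, mul_div_cancel_right₀ _ (hM.dotProduct_mulVec_add_pos hfg).ne']⟩
  · rintro _ ⟨f, g, hfg, rfl⟩
    rw [div_le_iff₀ (hM.dotProduct_mulVec_add_pos hfg)]
    exact (le_abs_self _).trans (hM.abs_two_mul_dotProduct_mulVec_le hZ f g)
end
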